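/- Let $A = \mathbb{C}[x_0,\ldots,x_m]/I$ be an artinian complete intersection algebra with $I$ generated by $m+1$ quadrics, and assume $m \geq 4$. Then for any two distinct points $[z], [w] \in \mathbb{P}(A_1)$, the subspace $\langle z, w \rangle A_1 \subseteq A_2$ has dimension at least $2m - 1$. -/

import Mathlib

open MvPolynomial

noncomputable section

/-- The linear form with coefficient vector `p`. -/
def linform {n : ℕ} (p : Fin n → ℂ) : MvPolynomial (Fin n) ℂ :=
  ∑ i, MvPolynomial.C (p i) * MvPolynomial.X i

/-- The apolarity pairing `⟨f, g⟩ = ∑_α f_α g_α α!` between polynomial spaces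
(`f` viewed in `S^d U^*`, `g` in `S^d U`). -/
def apolar {n : ℕ} (f g : MvPolynomial (Fin n) ℂ) : ℂ :=
  ∑ α ∈ f.support, f.coeff α * g.coeff α * ∏ i, ((α i).factorial : ℂ)

/-! The span of the products `z * v`, `w * v` is the image of the linear map
`Φ (a, b) = z * a + w * b` on pairs of linear forms, a space of dimension `2 (m + 1)`, so it
suffices to show `dim ker Φ ≤ 3`. As `z` and `w` are non-associate primes, `z * a + w * b = 0`
only for the multiples of `(-w, z)`. Otherwise `z * a + w * b` is a quadric of `span q` lying in
the ideal `(z, w)`, and these quadrics form a space of dimension at most `2`: if it had dimension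
`3`, then `z`, `w` and a basis of a complement of it in `span q` would be at most `m` polynomials
vanishing at the origin of `ℂ^(m+1)` and, like the `q i`, nowhere else. The ideal of the origin
would then be a minimal prime over an ideal with `m` generators, contradicting Krull's height
theorem, since the chain `0 ⊂ (X₀) ⊂ (X₀, X₁) ⊂ ⋯` shows that its height is `m + 1`. -/

section LinearAlgebra

open Module LinearMap

variable {K V W U : Type*} [Field K] [AddCommGroup V] [AddCommGroup W] [AddCommGroup U]
  [Module K V] [Module K W] [Module K U]

theorem LinearMap.finrank_ker_comp_le [FiniteDimensional K V] (f : V →ₗ[K] W) (g : W →ₗ[K] U) :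
    finrank K (ker (g ∘ₗ f)) ≤ finrank K (ker g ⊓ range f : Submodule K W) + finrank K (ker f) := by
  set f' := f.domRestrict (ker (g ∘ₗ f))
  have hrange : range f' ≤ ker g ⊓ range f := by
    rintro _ ⟨x, rfl⟩
    exact ⟨x.2, x, rfl⟩
  have hker : finrank K (ker f') ≤ finrank K (ker f) := by
    refine finrank_le_finrank_of_injective (f := (ker (g ∘ₗ f)).subtype.restrict
      (q := ker f) fun x hx => hx) fun x y h => ?_
    have hxy := congrArg Subtype.val h
    exact Subtype.ext (Subtype.ext hxy)
  have := f'.finrank_range_add_finrank_ker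
  have := Submodule.finrank_mono hrange
  omega

end LinearAlgebra

theorem exists_eq_neg_mul_and_eq_mul_of_mul_add_mul_eq_zero {R : Type*} [CommRing R] [IsDomain R]
    {z w a b : R} (hz : Prime z) (hzw : ¬ z ∣ w) (h : z * a + w * b = 0) :
    ∃ g, a = -(g * w) ∧ b = g * z := by
  obtain ⟨g, rfl⟩ : z ∣ b :=
    (hz.dvd_or_dvd ⟨-a, by linear_combination h⟩).resolve_left hzw
  exact ⟨g, mul_left_cancel₀ hz.ne_zero (by linear_combination h), by ring⟩

namespace MvPolynomial

instance {R σ : Type*} [CommSemiring R] [Finite σ] (n : ℕ) :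
    Module.Finite R (homogeneousSubmodule σ R n) :=
  Module.Finite.iff_fg.2 (homogeneousSubmodule_fg σ R n)

section Height

variable {R σ : Type*} [CommRing R] [DecidableEq σ]

variable (R) in
def zeroOutVars (s : Finset σ) : MvPolynomial σ R →ₐ[R] MvPolynomial σ R :=
  aeval fun i => if i ∈ s then 0 else X i

lemma zeroOutVars_comp_of_subset {s t : Finset σ} (hst : s ⊆ t) :
    (zeroOutVars R t).comp (zeroOutVars R s) = zeroOutVars R t := by
  ext i : 1
  by_cases hi : i ∈ s
  · simp [zeroOutVars, hi, hst hi]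
  · simp [zeroOutVars, hi]

variable [IsDomain R]

lemma ker_zeroOutVars_lt_insert {s : Finset σ} {a : σ} (ha : a ∉ s) :
    RingHom.ker (zeroOutVars R s) < RingHom.ker (zeroOutVars R (insert a s)) := by
  refine lt_of_le_of_ne (fun p hp => ?_) fun h => ?_
  · rw [RingHom.mem_ker] at hp ⊢
    rw [← zeroOutVars_comp_of_subset (Finset.subset_insert a s), AlgHom.comp_apply, hp, map_zero]
  · have hX : (X a : MvPolynomial σ R) ∈ RingHom.ker (zeroOutVars R (insert a s)) := by
      simp [zeroOutVars]
    rw [← h, RingHom.mem_ker] at hX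
    simp [zeroOutVars, ha, X_ne_zero] at hX

lemma card_le_height_ker_zeroOutVars (s : Finset σ) :
    (s.card : ℕ∞) ≤ (RingHom.ker (zeroOutVars R s)).height := by
  induction s using Finset.induction_on with
  | empty => simp
  | insert a s ha ih =>
    have := RingHom.ker_isPrime (zeroOutVars R s)
    have := RingHom.ker_isPrime (zeroOutVars R (insert a s))
    rw [Finset.card_insert_of_notMem ha, Nat.cast_succ]
    exact (add_le_add_left ih 1).trans
      (Ideal.height_add_one_le_of_lt_of_isPrime (ker_zeroOutVars_lt_insert ha))

end Height

section Graded

attribute [local instance] MvPolynomial.gradedAlgebra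

variable {R σ : Type*} [CommRing R]

lemma homogeneousComponent_add_mul_of_isHomogeneous {p q : MvPolynomial σ R} {d : ℕ}
    (hq : q.IsHomogeneous d) (n : ℕ) :
    homogeneousComponent (n + d) (p * q) = homogeneousComponent n p * q := by
  have hdecomp : ∀ (f : MvPolynomial σ R) k,
      (DirectSum.decompose (homogeneousSubmodule σ R) f k : MvPolynomial σ R) =
        homogeneousComponent k f := fun f k => decomposition.decompose'_apply f k
  rw [← hdecomp, ← hdecomp, DirectSum.coe_decompose_mul_of_right_mem _ _ hq,
    if_pos (Nat.le_add_left d n), Nat.add_sub_cancel]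

lemma mem_span_of_isHomogeneous_of_mem_ideal_span {ι : Type*} [Fintype ι]
    {q : ι → MvPolynomial σ R} {d : ℕ} (hq : ∀ i, (q i).IsHomogeneous d)
    {f : MvPolynomial σ R} (hf : f.IsHomogeneous d) (hfI : f ∈ Ideal.span (Set.range q)) :
    f ∈ Submodule.span R (Set.range q) := by
  obtain ⟨c, rfl⟩ := Ideal.mem_span_range_iff_exists_fun.1 hfI
  rw [← homogeneousComponent_eq_self hf, map_sum]
  refine Submodule.sum_mem _ fun i _ => ?_
  rw [← zero_add d, homogeneousComponent_add_mul_of_isHomogeneous (hq i),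
    homogeneousComponent_zero, ← smul_eq_C_mul]
  exact Submodule.smul_mem _ _ (Submodule.subset_span ⟨i, rfl⟩)

end Graded

variable {K σ : Type*} [Field K]

lemma eval_zero_of_isHomogeneous {f : MvPolynomial σ K} {n : ℕ} (hf : f.IsHomogeneous n)
    (hn : n ≠ 0) : eval 0 f = 0 := by
  rw [eval_zero, constantCoeff_eq]
  exact hf.coeff_eq_zero (by simpa using hn.symm)

lemma eval_eq_zero_of_mem_span {s : Set (MvPolynomial σ K)} {x : σ → K}
    (h : ∀ f ∈ s, eval x f = 0) {f : MvPolynomial σ K} (hf : f ∈ Submodule.span K s) :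
    eval x f = 0 := by
  have : Submodule.span K s ≤ LinearMap.ker (aeval x).toLinearMap :=
    Submodule.span_le.2 fun g hg => by simpa using h g hg
  simpa using this hf

section CommonZero

variable [Fintype σ]

lemma card_le_height_vanishingIdeal_zero :
    (Fintype.card σ : ℕ∞) ≤ (vanishingIdeal K {(0 : σ → K)} : Ideal (MvPolynomial σ K)).height := by
  classical
  convert card_le_height_ker_zeroOutVars (R := K) (Finset.univ : Finset σ) using 2
  · simp
  ext p
  simp [zeroOutVars, ← Pi.zero_def, -aeval_eq_bind₁, aeval_zero]

variable [IsAlgClosed K]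

theorem exists_ne_zero_forall_eval_eq_zero {s : Set (MvPolynomial σ K)}
    (hs : s.Finite) (hcard : s.ncard < Fintype.card σ) (h0 : ∀ f ∈ s, eval 0 f = 0) :
    ∃ x : σ → K, x ≠ 0 ∧ ∀ f ∈ s, eval x f = 0 := by
  by_contra! h
  have hzero : zeroLocus K (Ideal.span s) = {0} := by
    ext x
    simp only [zeroLocus_span, Set.mem_ofPred_eq, Set.mem_singleton_iff]
    refine ⟨fun hx => ?_, fun hx f hf => hx ▸ h0 f hf⟩
    by_contra hx0
    obtain ⟨f, hf, hfx⟩ := h x hx0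
    exact hfx (hx f hf)
  have hmin : vanishingIdeal K {(0 : σ → K)} ∈ (Ideal.span s).minimalPrimes := by
    rw [← Ideal.radical_minimalPrimes, ← vanishingIdeal_zeroLocus_eq_radical (K := K), hzero,
      Ideal.minimalPrimes_eq_subsingleton_self]
    rfl
  have hle := (card_le_height_vanishingIdeal_zero (K := K) (σ := σ)).trans
    (Ideal.height_le_card_of_mem_minimalPrimes_span hs hmin)
  exact absurd (by exact_mod_cast hle) hcard.not_ge

theorem finrank_inf_span_add_card_le (Q : Submodule K (MvPolynomial σ K))
    [FiniteDimensional K Q] (hQ0 : ∀ f ∈ Q, eval 0 f = 0)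
    (hQ : ∀ x : σ → K, (∀ f ∈ Q, eval x f = 0) → x = 0)
    {s : Set (MvPolynomial σ K)} (hs : s.Finite) (hs0 : ∀ f ∈ s, eval 0 f = 0) :
    Module.finrank K (Q ⊓ (Ideal.span s).restrictScalars K : Submodule K _) + Fintype.card σ ≤
      Module.finrank K Q + s.ncard := by
  let P : Submodule K Q := (Q ⊓ (Ideal.span s).restrictScalars K).comap Q.subtype
  obtain ⟨C, hPC⟩ := P.exists_isCompl
  have := Module.Free.of_divisionRing K C
  let b := Module.finBasis K C
  let t : Set (MvPolynomial σ K) := s ∪ Set.range fun i => ((b i : Q) : MvPolynomial σ K)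
  have hP : Module.finrank K P =
      Module.finrank K (Q ⊓ (Ideal.span s).restrictScalars K : Submodule K _) :=
    (Submodule.comapSubtypeEquivOfLe inf_le_left).finrank_eq
  have ht : t.ncard ≤ s.ncard + Module.finrank K C := by
    refine (Set.ncard_union_le _ _).trans (Nat.add_le_add_left (le_of_eq ?_) _)
    have hinj : Function.Injective fun i => ((b i : Q) : MvPolynomial σ K) :=
      Subtype.val_injective.comp (Subtype.val_injective.comp b.injective)
    rw [Set.ncard_range_of_injective hinj, Nat.card_eq_fintype_card, Fintype.card_fin]
  have hrank := Submodule.finrank_add_eq_of_isCompl hPC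
  by_contra! hlt
  obtain ⟨x, hx0, hx⟩ := exists_ne_zero_forall_eval_eq_zero (s := t)
    (hs.union (Set.finite_range _)) (by omega) (by
      rintro f (hf | ⟨i, rfl⟩)
      exacts [hs0 f hf, hQ0 _ (b i : Q).2])
  refine hx0 (hQ x fun f hf => ?_)
  have hJ : ∀ g ∈ Ideal.span s, eval x g = 0 := fun g hg =>
    (Ideal.span_le (I := RingHom.ker (eval x))).2 (fun g hg => hx g (Or.inl hg)) hg
  have hC : ∀ c : C, eval x ((c : Q) : MvPolynomial σ K) = 0 := by
    have : (aeval x).toLinearMap ∘ₗ Q.subtype ∘ₗ C.subtype = 0 :=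
      b.ext fun i => by simpa using hx _ (Or.inr ⟨i, rfl⟩)
    exact fun c => by simpa using LinearMap.congr_fun this c
  obtain ⟨p, hp, c, hc, hpc⟩ :=
    Submodule.mem_sup.1 (hPC.sup_eq_top ▸ Submodule.mem_top : (⟨f, hf⟩ : Q) ∈ P ⊔ C)
  have hf' : (p : MvPolynomial σ K) + c = f := congrArg Subtype.val hpc
  rw [← hf', map_add, hJ p.1 hp.2, hC ⟨c, hc⟩, add_zero]

theorem finrank_span_inf_span_pair_add_card_le {ι : Type*} [Fintype ι]
    {q : ι → MvPolynomial σ K} (hq0 : ∀ i, eval 0 (q i) = 0)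
    (hq : ∀ x : σ → K, (∀ i, eval x (q i) = 0) → x = 0)
    {z w : MvPolynomial σ K} (hz0 : eval 0 z = 0) (hw0 : eval 0 w = 0) :
    Module.finrank K
        (Submodule.span K (Set.range q) ⊓ (Ideal.span {z, w}).restrictScalars K : Submodule K _) +
      Fintype.card σ ≤ Fintype.card ι + 2 := by
  have := FiniteDimensional.span_of_finite K (Set.finite_range q)
  have hQ0 : ∀ f ∈ Submodule.span K (Set.range q), eval 0 f = 0 := fun f =>
    eval_eq_zero_of_mem_span (by rintro _ ⟨i, rfl⟩; exact hq0 i)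
  have hQ : ∀ x : σ → K, (∀ f ∈ Submodule.span K (Set.range q), eval x f = 0) → x = 0 :=
    fun x hx => hq x fun i => hx _ (Submodule.subset_span ⟨i, rfl⟩)
  have hpair : ({z, w} : Set (MvPolynomial σ K)).ncard ≤ 2 :=
    (Set.ncard_insert_le _ _).trans (by simp)
  have := finrank_inf_span_add_card_le _ hQ0 hQ (Set.toFinite {z, w})
    (by rintro f (rfl | rfl) <;> assumption)
  have : Module.finrank K (Submodule.span K (Set.range q)) ≤ Fintype.card ι :=
    finrank_range_le_card q
  omega

end CommonZero

section LinearSyzygies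

lemma eq_C_of_isHomogeneous_mul {g z : MvPolynomial σ K} (hz : z.IsHomogeneous 1) (hz0 : z ≠ 0)
    (h : (g * z).IsHomogeneous 1) : g = C (coeff 0 g) := by
  rw [← totalDegree_eq_zero_iff_eq_C]
  rcases eq_or_ne g 0 with rfl | hg
  · simp
  have := h.totalDegree_le
  rw [totalDegree_mul_of_isDomain hg hz0, hz.totalDegree hz0] at this
  omega

lemma prime_of_isHomogeneous_one {z : MvPolynomial σ K} (hz : z.IsHomogeneous 1) (hz0 : z ≠ 0) :
    Prime z :=
  (irreducible_of_totalDegree_eq_one (hz.totalDegree hz0) fun x hx => isUnit_iff_ne_zero.2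
    fun hx0 => hz0 (MvPolynomial.ext _ _ fun i => by simpa [hx0] using hx i)).prime

lemma not_dvd_of_linearIndependent {z w : MvPolynomial σ K} (hz : z.IsHomogeneous 1)
    (hw : w.IsHomogeneous 1) (hzw : LinearIndependent K ![z, w]) : ¬ z ∣ w := by
  rintro ⟨g, rfl⟩
  have hg := eq_C_of_isHomogeneous_mul hz (hzw.ne_zero 0) (by rwa [mul_comm] at hw)
  have := LinearIndependent.pair_iff.1 hzw (coeff 0 g) (-1) (by
    rw [smul_eq_C_mul, neg_one_smul, ← hg]; ring)
  simp at this

lemma finrank_homogeneousSubmodule_one [Fintype σ] :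
    Module.finrank K (homogeneousSubmodule σ K 1) = Fintype.card σ := by
  rw [homogeneousSubmodule_one_eq_span_X,
    finrank_span_eq_card (linearIndependent_X (R := K) (σ := σ))]

def mulAddMul (z w : MvPolynomial σ K) :
    homogeneousSubmodule σ K 1 × homogeneousSubmodule σ K 1 →ₗ[K] MvPolynomial σ K :=
  (LinearMap.mulLeft K z ∘ₗ (homogeneousSubmodule σ K 1).subtype).coprod
    (LinearMap.mulLeft K w ∘ₗ (homogeneousSubmodule σ K 1).subtype)

@[simp]
lemma mulAddMul_apply (z w : MvPolynomial σ K)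
    (p : homogeneousSubmodule σ K 1 × homogeneousSubmodule σ K 1) :
    mulAddMul z w p = z * p.1 + w * p.2 := rfl

variable {z w : MvPolynomial σ K}

lemma range_mulAddMul_le_span :
    LinearMap.range (mulAddMul z w) ≤ (Ideal.span {z, w}).restrictScalars K := by
  rintro _ ⟨p, rfl⟩
  rw [mulAddMul_apply, Submodule.restrictScalars_mem]
  exact Ideal.add_mem _ (Ideal.mul_mem_right _ _ (Ideal.subset_span (by simp)))
    (Ideal.mul_mem_right _ _ (Ideal.subset_span (by simp)))

lemma isHomogeneous_mulAddMul (hz : z.IsHomogeneous 1) (hw : w.IsHomogeneous 1)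
    (p : homogeneousSubmodule σ K 1 × homogeneousSubmodule σ K 1) :
    (mulAddMul z w p).IsHomogeneous 2 :=
  (hz.mul p.1.2).add (hw.mul p.2.2)

lemma ker_mulAddMul_le_span_singleton (hz : z.IsHomogeneous 1) (hw : w.IsHomogeneous 1)
    (hzw : LinearIndependent K ![z, w]) :
    LinearMap.ker (mulAddMul z w) ≤ K ∙ (⟨-w, hw.neg⟩, ⟨z, hz⟩) := by
  rintro ⟨a, b⟩ hab
  rw [LinearMap.mem_ker, mulAddMul_apply] at hab
  dsimp only at hab
  obtain ⟨g, ha, hb⟩ := exists_eq_neg_mul_and_eq_mul_of_mul_add_mul_eq_zero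
    (prime_of_isHomogeneous_one hz (hzw.ne_zero 0)) (not_dvd_of_linearIndependent hz hw hzw) hab
  have hg := eq_C_of_isHomogeneous_mul hz (hzw.ne_zero 0) (hb ▸ b.2)
  refine Submodule.mem_span_singleton.2 ⟨coeff 0 g, Prod.ext (Subtype.ext ?_) (Subtype.ext ?_)⟩
  · simp [ha, smul_eq_C_mul, ← hg]
  · simp [hb, smul_eq_C_mul, ← hg]

lemma finrank_ker_mulAddMul_le_one (hz : z.IsHomogeneous 1) (hw : w.IsHomogeneous 1)
    (hzw : LinearIndependent K ![z, w]) :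
    Module.finrank K (LinearMap.ker (mulAddMul z w)) ≤ 1 :=
  (Submodule.finrank_mono (ker_mulAddMul_le_span_singleton hz hw hzw)).trans
    ((finrank_span_le_card _).trans (by simp))

lemma span_mk_mul_eq_range_mulAddMul (I : Ideal (MvPolynomial σ K)) (z w : MvPolynomial σ K) :
    Submodule.span K {x : MvPolynomial σ K ⧸ I | ∃ v : MvPolynomial σ K, v.IsHomogeneous 1 ∧
      (x = Ideal.Quotient.mkₐ K I (z * v) ∨ x = Ideal.Quotient.mkₐ K I (w * v))} =
    LinearMap.range ((Ideal.Quotient.mkₐ K I).toLinearMap ∘ₗ mulAddMul z w) := by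
  refine le_antisymm (Submodule.span_le.2 ?_) ?_
  · rintro _ ⟨v, hv, rfl | rfl⟩
    · exact ⟨(⟨v, hv⟩, 0), by simp⟩
    · exact ⟨(0, ⟨v, hv⟩), by simp⟩
  · rintro _ ⟨p, rfl⟩
    simp only [LinearMap.coe_comp, Function.comp_apply, mulAddMul_apply,
      AlgHom.toLinearMap_apply, map_add]
    exact Submodule.add_mem _ (Submodule.subset_span ⟨p.1, p.1.2, Or.inl rfl⟩)
      (Submodule.subset_span ⟨p.2, p.2.2, Or.inr rfl⟩)

end LinearSyzygies

end MvPolynomial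

theorem stmt10_general (m : ℕ)
    (q : Fin (m + 1) → MvPolynomial (Fin (m + 1)) ℂ)
    (hhom : ∀ i, (q i).IsHomogeneous 2)
    (hci : ∀ p : Fin (m + 1) → ℂ, (∀ i, MvPolynomial.eval p (q i) = 0) → p = 0)
    (z w : MvPolynomial (Fin (m + 1)) ℂ)
    (hz : z.IsHomogeneous 1) (hw : w.IsHomogeneous 1)
    (hzw : LinearIndependent ℂ ![z, w]) :
    2 * m - 1 ≤ Module.finrank ℂ
      (Submodule.span ℂ
        {x : MvPolynomial (Fin (m + 1)) ℂ ⧸ Ideal.span (Set.range q) |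
          ∃ v : MvPolynomial (Fin (m + 1)) ℂ, v.IsHomogeneous 1 ∧
            (x = Ideal.Quotient.mkₐ ℂ (Ideal.span (Set.range q)) (z * v) ∨
             x = Ideal.Quotient.mkₐ ℂ (Ideal.span (Set.range q)) (w * v))}) := by
  rw [span_mk_mul_eq_range_mulAddMul]
  set π := (Ideal.Quotient.mkₐ ℂ (Ideal.span (Set.range q))).toLinearMap
  have hquad := finrank_span_inf_span_pair_add_card_le
    (fun i => eval_zero_of_isHomogeneous (hhom i) two_ne_zero) hci
    (eval_zero_of_isHomogeneous hz one_ne_zero) (eval_zero_of_isHomogeneous hw one_ne_zero)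
  have hker : LinearMap.ker π ⊓ LinearMap.range (mulAddMul z w) ≤
      Submodule.span ℂ (Set.range q) ⊓ (Ideal.span {z, w}).restrictScalars ℂ := by
    rintro _ ⟨hI, p, rfl⟩
    exact ⟨mem_span_of_isHomogeneous_of_mem_ideal_span hhom (isHomogeneous_mulAddMul hz hw p)
      (Ideal.Quotient.eq_zero_iff_mem.1 hI), range_mulAddMul_le_span ⟨p, rfl⟩⟩
  have hdim : Module.finrank ℂ
      (homogeneousSubmodule (Fin (m + 1)) ℂ 1 × homogeneousSubmodule (Fin (m + 1)) ℂ 1) =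
        2 * (m + 1) := by
    rw [Module.finrank_prod, finrank_homogeneousSubmodule_one, Fintype.card_fin]; ring
  have := FiniteDimensional.span_of_finite ℂ (Set.finite_range q)
  have := Submodule.finrank_mono hker
  have := LinearMap.finrank_ker_comp_le (mulAddMul z w) π
  have := finrank_ker_mulAddMul_le_one hz hw hzw
  have := (π ∘ₗ mulAddMul z w).finrank_range_add_finrank_ker
  simp only [Fintype.card_fin] at hquad
  omega

/-- let `A = ℂ[x₀,…,xₘ]/I` be an artinian complete intersection of `m+1`
quadrics with `m ≥ 4`. For any two distinct points `[z], [w]` of `ℙ(A_1)` (i.e. two linearly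
independent linear forms `z, w`), the subspace `⟨z,w⟩A_1 ⊆ A_2` spanned by all products
`z·v, w·v` with `v` linear has dimension at least `2m - 1`. -/
theorem stmt10 (m : ℕ) (hm : 4 ≤ m)
    (q : Fin (m + 1) → MvPolynomial (Fin (m + 1)) ℂ)
    (hhom : ∀ i, (q i).IsHomogeneous 2)
    (hci : ∀ p : Fin (m + 1) → ℂ, (∀ i, MvPolynomial.eval p (q i) = 0) → p = 0)
    (z w : MvPolynomial (Fin (m + 1)) ℂ)
    (hz : z.IsHomogeneous 1) (hw : w.IsHomogeneous 1)
    (hzw : LinearIndependent ℂ ![z, w]) :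
    2 * m - 1 ≤ Module.finrank ℂ
      (Submodule.span ℂ
        {x : MvPolynomial (Fin (m + 1)) ℂ ⧸ Ideal.span (Set.range q) |
          ∃ v : MvPolynomial (Fin (m + 1)) ℂ, v.IsHomogeneous 1 ∧
            (x = Ideal.Quotient.mkₐ ℂ (Ideal.span (Set.range q)) (z * v) ∨
             x = Ideal.Quotient.mkₐ ℂ (Ideal.span (Set.range q)) (w * v))}) :=
  stmt10_general m q hhom hci z w hz hw hzw
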